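/- Let h : ℝ → ℝ be smooth with h < 0, and let μ = √(−h)·(c₁ + c₂ F)² with F' = √(−h) and c₁ + c₂F ≠ 0 on an interval. Define the differential operators on smooth complex functions of q: Q̂ψ = −(i/(2μ))[(μ/√(−h)) ψ' + ((μ/√(−h)) ψ)'] and Ĥψ = −(1/(2μ)) (μ/h · ψ')' + ψ. Then the commutator vanishes identically: Q̂(Ĥψ) − Ĥ(Q̂ψ) = 0 for every smooth ψ. -/

import Mathlib

/-- The charge operator `Q̂ψ = −(i/(2μ))[(μ/√(−h))ψ' + ((μ/√(−h))ψ)']`. -/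
noncomputable def Qop (h μ : ℝ → ℝ) (ψ : ℝ → ℂ) (q : ℝ) : ℂ :=
  -(Complex.I / (2 * (μ q : ℂ))) *
    (((μ q / Real.sqrt (-h q) : ℝ) : ℂ) * deriv ψ q
      + deriv (fun x => ((μ x / Real.sqrt (-h x) : ℝ) : ℂ) * ψ x) q)

/-- The Wheeler–DeWitt operator `Ĥψ = −(1/(2μ))(μ/h · ψ')' + ψ`. -/
noncomputable def Hop (h μ : ℝ → ℝ) (ψ : ℝ → ℂ) (q : ℝ) : ℂ :=
  -(1 / (2 * (μ q : ℂ))) * deriv (fun x => ((μ x / h x : ℝ) : ℂ) * deriv ψ x) q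
    + ψ q

/- Auxiliary abbreviations: complex versions of `√(−h)`, its derivatives, and
`c₁ + c₂ F`. -/
noncomputable def scx (h : ℝ → ℝ) (x : ℝ) : ℂ := ((Real.sqrt (-h x) : ℝ) : ℂ)
noncomputable def s1cx (h : ℝ → ℝ) (x : ℝ) : ℂ :=
  ((deriv (fun y => Real.sqrt (-h y)) x : ℝ) : ℂ)
noncomputable def s2cx (h : ℝ → ℝ) (x : ℝ) : ℂ :=
  ((deriv (deriv (fun y => Real.sqrt (-h y))) x : ℝ) : ℂ)
noncomputable def pcx (F : ℝ → ℝ) (c₁ c₂ : ℝ) (x : ℝ) : ℂ := ((c₁ + c₂ * F x : ℝ) : ℂ)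

lemma sqrt_pos_aux (h : ℝ → ℝ) (hneg : ∀ x, h x < 0) (x : ℝ) :
    0 < Real.sqrt (-h x) := Real.sqrt_pos.2 (by linarith [hneg x])

lemma scx_ne (h : ℝ → ℝ) (hneg : ∀ x, h x < 0) (x : ℝ) : scx h x ≠ 0 :=
  Complex.ofReal_ne_zero.2 (ne_of_gt (sqrt_pos_aux h hneg x))

lemma pcx_ne (F : ℝ → ℝ) (c₁ c₂ : ℝ) (hφ0 : ∀ x, c₁ + c₂ * F x ≠ 0) (x : ℝ) :
    pcx F c₁ c₂ x ≠ 0 := Complex.ofReal_ne_zero.2 (hφ0 x)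

lemma smooth_sqrt (h : ℝ → ℝ) (hh : ContDiff ℝ (⊤ : ℕ∞) h) (hneg : ∀ x, h x < 0) :
    ContDiff ℝ (⊤ : ℕ∞) (fun y => Real.sqrt (-h y)) :=
  hh.neg.sqrt fun x => ne_of_gt (by linarith [hneg x])

lemma smooth_deriv' {E : Type*} [NormedAddCommGroup E] [NormedSpace ℝ E]
    {f : ℝ → E} (hf : ContDiff ℝ ((⊤ : ℕ∞) : WithTop ℕ∞) f) :
    ContDiff ℝ ((⊤ : ℕ∞) : WithTop ℕ∞) (deriv f) :=
  (contDiff_infty_iff_deriv.1 hf).2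

lemma diff_of_inf {E : Type*} [NormedAddCommGroup E] [NormedSpace ℝ E]
    {f : ℝ → E} (hf : ContDiff ℝ ((⊤ : ℕ∞) : WithTop ℕ∞) f) :
    Differentiable ℝ f :=
  (contDiff_infty_iff_deriv.1 hf).1

lemma hasDerivAt_scx (h : ℝ → ℝ) (hh : ContDiff ℝ (⊤ : ℕ∞) h) (hneg : ∀ x, h x < 0) (x : ℝ) :
    HasDerivAt (fun y => scx h y) (s1cx h x) x :=
  (((smooth_sqrt h hh hneg).differentiable (by simp) x).hasDerivAt).ofReal_comp

lemma hasDerivAt_s1cx (h : ℝ → ℝ) (hh : ContDiff ℝ (⊤ : ℕ∞) h) (hneg : ∀ x, h x < 0) (x : ℝ) :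
    HasDerivAt (fun y => s1cx h y) (s2cx h x) x :=
  ((diff_of_inf (smooth_deriv' ((smooth_sqrt h hh hneg).of_le (by simp)))
      x).hasDerivAt).ofReal_comp

lemma hasDerivAt_pcx (h F : ℝ → ℝ) (c₁ c₂ : ℝ)
    (hF : ∀ x, HasDerivAt F (Real.sqrt (-h x)) x) (x : ℝ) :
    HasDerivAt (fun y => pcx F c₁ c₂ y) ((c₂ : ℂ) * scx h x) x := by
  have h1 : HasDerivAt (fun y => c₁ + c₂ * F y) (c₂ * Real.sqrt (-h x)) x :=
    ((hF x).const_mul c₂).const_add c₁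
  have h2 : ((c₂ * Real.sqrt (-h x) : ℝ) : ℂ) = (c₂ : ℂ) * scx h x := by
    simp only [scx]; push_cast; ring
  exact h2 ▸ h1.ofReal_comp

lemma mu_c (h μ F : ℝ → ℝ) (c₁ c₂ : ℝ)
    (hμ : ∀ x, μ x = Real.sqrt (-h x) * (c₁ + c₂ * F x) ^ 2) (x : ℝ) :
    ((μ x : ℝ) : ℂ) = scx h x * (pcx F c₁ c₂ x * pcx F c₁ c₂ x) := by
  rw [hμ x]; simp only [scx, pcx]; push_cast; ring

lemma hasDerivAt_sq_c {f : ℝ → ℂ} {f' : ℂ} {x : ℝ} (hf : HasDerivAt f f' x) :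
    HasDerivAt (fun y => f y ^ 2) (f' * f x + f x * f') x := by
  have h := hf.mul hf
  have h2 : (fun y => f y ^ 2) = fun y => f y * f y := funext fun y => sq (f y)
  rw [h2]
  exact h

lemma claimQ (h μ F : ℝ → ℝ) (c₁ c₂ : ℝ)
    (hneg : ∀ x, h x < 0)
    (hφ0 : ∀ x, c₁ + c₂ * F x ≠ 0)
    (hF : ∀ x, HasDerivAt F (Real.sqrt (-h x)) x)
    (hh : ContDiff ℝ (⊤ : ℕ∞) h)
    (hμ : ∀ x, μ x = Real.sqrt (-h x) * (c₁ + c₂ * F x) ^ 2)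
    (f : ℝ → ℂ) (d : ℂ) (x : ℝ) (hf : HasDerivAt f d x) :
    Qop h μ f x = -Complex.I * (d / scx h x + (c₂ : ℂ) * f x / pcx F c₁ c₂ x) := by
  have hsne : ∀ y, Real.sqrt (-h y) ≠ 0 := fun y => ne_of_gt (sqrt_pos_aux h hneg y)
  have hA : ∀ y, ((μ y / Real.sqrt (-h y) : ℝ) : ℂ) = pcx F c₁ c₂ y * pcx F c₁ c₂ y := by
    intro y
    rw [hμ y, mul_comm, mul_div_assoc, div_self (hsne y), mul_one]
    simp only [pcx]; push_cast; ring
  have hfun : (fun y => ((μ y / Real.sqrt (-h y) : ℝ) : ℂ) * f y)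
      = fun y => (pcx F c₁ c₂ y * pcx F c₁ c₂ y) * f y := funext fun y => by rw [hA y]
  have hP := hasDerivAt_pcx h F c₁ c₂ hF x
  have hder : deriv (fun y => (pcx F c₁ c₂ y * pcx F c₁ c₂ y) * f y) x = _ :=
    ((hP.mul hP).mul hf).deriv
  simp only [Qop]
  rw [hfun, hder, hA x, hf.deriv, mu_c h μ F c₁ c₂ hμ x]
  simp only [Pi.mul_apply]
  have h1 : scx h x ≠ 0 := scx_ne h hneg x
  have h2 : pcx F c₁ c₂ x ≠ 0 := pcx_ne F c₁ c₂ hφ0 x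
  field_simp [h1, h2]
  ring

lemma claimH (h μ F : ℝ → ℝ) (c₁ c₂ : ℝ)
    (hh : ContDiff ℝ (⊤ : ℕ∞) h)
    (hneg : ∀ x, h x < 0)
    (hφ0 : ∀ x, c₁ + c₂ * F x ≠ 0)
    (hF : ∀ x, HasDerivAt F (Real.sqrt (-h x)) x)
    (hμ : ∀ x, μ x = Real.sqrt (-h x) * (c₁ + c₂ * F x) ^ 2)
    (f g : ℝ → ℂ) (d2 : ℂ) (x : ℝ)
    (hg : deriv f = g) (hd2 : HasDerivAt g d2 x) :
    Hop h μ f x = d2 / (2 * (scx h x * scx h x))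
      + ((c₂ : ℂ) / (scx h x * pcx F c₁ c₂ x)
          - s1cx h x / (2 * (scx h x * (scx h x * scx h x)))) * g x
      + f x := by
  have hsne : ∀ y, Real.sqrt (-h y) ≠ 0 := fun y => ne_of_gt (sqrt_pos_aux h hneg y)
  have hB : ∀ y, ((μ y / h y : ℝ) : ℂ)
      = -(pcx F c₁ c₂ y * pcx F c₁ c₂ y / scx h y) := by
    intro y
    have hsq : Real.sqrt (-h y) ^ 2 = -h y := Real.sq_sqrt (by linarith [hneg y])
    have hhy : h y ≠ 0 := ne_of_lt (hneg y)
    have hre : (μ y / h y : ℝ) = -((c₁ + c₂ * F y) ^ 2 / Real.sqrt (-h y)) := by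
      rw [hμ y, div_eq_iff hhy]
      have hsi : Real.sqrt (-h y) * (Real.sqrt (-h y))⁻¹ = 1 := mul_inv_cancel₀ (hsne y)
      linear_combination ((c₁ + c₂ * F y) ^ 2 * (Real.sqrt (-h y))⁻¹) * hsq
        + (-(c₁ + c₂ * F y) ^ 2 * Real.sqrt (-h y)) * hsi
    rw [hre]
    simp only [pcx, scx]
    push_cast
    ring
  have hfun : (fun y => ((μ y / h y : ℝ) : ℂ) * deriv f y)
      = fun y => -(pcx F c₁ c₂ y * pcx F c₁ c₂ y / scx h y) * g y :=
    funext fun y => by rw [hB y, hg]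
  have hP := hasDerivAt_pcx h F c₁ c₂ hF x
  have hS := hasDerivAt_scx h hh hneg x
  have hBd : HasDerivAt (fun y => -(pcx F c₁ c₂ y * pcx F c₁ c₂ y / scx h y)) _ x :=
    ((hP.mul hP).div hS (scx_ne h hneg x)).neg
  have hder : deriv (fun y => -(pcx F c₁ c₂ y * pcx F c₁ c₂ y / scx h y) * g y) x = _ :=
    (hBd.mul hd2).deriv
  simp only [Hop]
  rw [hfun, hder, mu_c h μ F c₁ c₂ hμ x]
  simp only [Pi.mul_apply]
  have h1 : scx h x ≠ 0 := scx_ne h hneg x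
  have h2 : pcx F c₁ c₂ x ≠ 0 := pcx_ne F c₁ c₂ hφ0 x
  have hSi : scx h x * (scx h x)⁻¹ = 1 := mul_inv_cancel₀ h1
  have hPi : pcx F c₁ c₂ x * (pcx F c₁ c₂ x)⁻¹ = 1 := mul_inv_cancel₀ h2
  linear_combination (((pcx F c₁ c₂ x) * ((scx h x)⁻¹) * ((pcx F c₁ c₂ x)⁻¹)^2 * (g x) * ((c₂ : ℂ))) + ((scx h x) * (pcx F c₁ c₂ x) * ((scx h x)⁻¹)^2 * ((pcx F c₁ c₂ x)⁻¹)^2 * (g x) * ((c₂ : ℂ)))) * hSi + ((((scx h x)⁻¹) * ((pcx F c₁ c₂ x)⁻¹) * (g x) * ((c₂ : ℂ))) + ((1/2 : ℂ) * ((scx h x)⁻¹)^2 * (d2)) + ((-1/2 : ℂ) * ((scx h x)⁻¹)^3 * (s1cx h x) * (g x)) + ((1/2 : ℂ) * (pcx F c₁ c₂ x) * ((scx h x)⁻¹)^2 * ((pcx F c₁ c₂ x)⁻¹) * (d2)) + ((-1/2 : ℂ) * (pcx F c₁ c₂ x) * ((scx h x)⁻¹)^3 * ((pcx F c₁ c₂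 x)⁻¹) * (s1cx h x) * (g x))) * hPi

/-- With the admissible measure `μ = √(−h)(c₁ + c₂F)²`, `F' = √(−h)`, the
charge operator commutes with the Wheeler–DeWitt operator identically,
`[Q̂, Ĥ]ψ = 0` for every smooth `ψ`. -/
theorem stmt_15
    (h F : ℝ → ℝ) (c₁ c₂ : ℝ)
    (hh : ContDiff ℝ (⊤ : ℕ∞) h) (hneg : ∀ x, h x < 0)
    (hF : ∀ x, HasDerivAt F (Real.sqrt (-h x)) x)
    (hφ0 : ∀ x, c₁ + c₂ * F x ≠ 0)
    (μ : ℝ → ℝ)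
    (hμ : ∀ x, μ x = Real.sqrt (-h x) * (c₁ + c₂ * F x) ^ 2) :
    ∀ (ψ : ℝ → ℂ), ContDiff ℝ (⊤ : ℕ∞) ψ →
      ∀ q, Qop h μ (Hop h μ ψ) q - Hop h μ (Qop h μ ψ) q = 0 := by
  intro ψ hψ q
  have hψ0 : ContDiff ℝ ((⊤ : ℕ∞) : WithTop ℕ∞) ψ := hψ.of_le (by simp)
  have hψ1 := smooth_deriv' hψ0
  have hψ2 := smooth_deriv' hψ1
  have hψd : ∀ x, HasDerivAt ψ (deriv ψ x) x :=
    fun x => (diff_of_inf hψ0 x).hasDerivAt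
  have hψ1d : ∀ x, HasDerivAt (deriv ψ) (deriv (deriv ψ) x) x :=
    fun x => (diff_of_inf hψ1 x).hasDerivAt
  have hψ2d : ∀ x, HasDerivAt (deriv (deriv ψ)) (deriv (deriv (deriv ψ)) x) x :=
    fun x => (diff_of_inf hψ2 x).hasDerivAt
  have hSd : ∀ x, HasDerivAt (fun y => scx h y) (s1cx h x) x := hasDerivAt_scx h hh hneg
  have hS1d : ∀ x, HasDerivAt (fun y => s1cx h y) (s2cx h x) x := hasDerivAt_s1cx h hh hneg
  have hPd : ∀ x, HasDerivAt (fun y => pcx F c₁ c₂ y) ((c₂ : ℂ) * scx h x) x :=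
    hasDerivAt_pcx h F c₁ c₂ hF
  have hSne : ∀ x, scx h x ≠ 0 := scx_ne h hneg
  have hPne : ∀ x, pcx F c₁ c₂ x ≠ 0 := pcx_ne F c₁ c₂ hφ0
  -- closed form for Hop ψ
  have hE : Hop h μ ψ = (fun x => deriv (deriv ψ) x / (2 * (scx h x * scx h x))
      + ((c₂ : ℂ) / (scx h x * pcx F c₁ c₂ x)
          - s1cx h x / (2 * (scx h x * (scx h x * scx h x)))) * deriv ψ x
      + ψ x) :=
    funext fun x => claimH h μ F c₁ c₂ hh hneg hφ0 hF hμ ψ (deriv ψ) _ x rfl (hψ1d x)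
  -- derivative of that closed form
  have hEd : HasDerivAt (fun x => deriv (deriv ψ) x / (2 * (scx h x * scx h x))
      + ((c₂ : ℂ) / (scx h x * pcx F c₁ c₂ x)
          - s1cx h x / (2 * (scx h x * (scx h x * scx h x)))) * deriv ψ x
      + ψ x) _ q :=
    (((hψ2d q).div (((hSd q).mul (hSd q)).const_mul 2)
        (mul_ne_zero two_ne_zero (mul_ne_zero (hSne q) (hSne q)))).add
      ((((hasDerivAt_const q ((c₂ : ℂ))).div ((hSd q).mul (hPd q))
            (mul_ne_zero (hSne q) (hPne q))).sub
          ((hS1d q).div (((hSd q).mul ((hSd q).mul (hSd q))).const_mul 2)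
            (mul_ne_zero two_ne_zero
              (mul_ne_zero (hSne q) (mul_ne_zero (hSne q) (hSne q)))))).mul
        (hψ1d q))).add (hψd q)
  -- closed form for Qop ψ
  have hK : Qop h μ ψ = (fun x => -Complex.I *
      (deriv ψ x / scx h x + (c₂ : ℂ) * ψ x / pcx F c₁ c₂ x)) :=
    funext fun x => claimQ h μ F c₁ c₂ hneg hφ0 hF hh hμ ψ _ x (hψd x)
  -- its derivative, as a function
  have hK1at : ∀ x, HasDerivAt (fun y => -Complex.I *
      (deriv ψ y / scx h y + (c₂ : ℂ) * ψ y / pcx F c₁ c₂ y))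
      (-Complex.I * ((deriv (deriv ψ) x * scx h x - deriv ψ x * s1cx h x)
            / scx h x ^ 2
        + ((c₂ : ℂ) * deriv ψ x * pcx F c₁ c₂ x
            - (c₂ : ℂ) * ψ x * ((c₂ : ℂ) * scx h x)) / pcx F c₁ c₂ x ^ 2)) x :=
    fun x => (((hψ1d x).div (hSd x) (hSne x)).add
      (((hψd x).const_mul ((c₂ : ℂ))).div (hPd x) (hPne x))).const_mul (-Complex.I)
  have hderivK : deriv (fun y => -Complex.I *
      (deriv ψ y / scx h y + (c₂ : ℂ) * ψ y / pcx F c₁ c₂ y))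
      = fun x => -Complex.I * ((deriv (deriv ψ) x * scx h x - deriv ψ x * s1cx h x)
            / scx h x ^ 2
        + ((c₂ : ℂ) * deriv ψ x * pcx F c₁ c₂ x
            - (c₂ : ℂ) * ψ x * ((c₂ : ℂ) * scx h x)) / pcx F c₁ c₂ x ^ 2) :=
    funext fun x => (hK1at x).deriv
  have hdK1 : HasDerivAt (fun x => -Complex.I *
      ((deriv (deriv ψ) x * scx h x - deriv ψ x * s1cx h x) / scx h x ^ 2
        + ((c₂ : ℂ) * deriv ψ x * pcx F c₁ c₂ x
            - (c₂ : ℂ) * ψ x * ((c₂ : ℂ) * scx h x)) / pcx F c₁ c₂ x ^ 2)) _ q :=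
    (((((hψ2d q).mul (hSd q)).sub ((hψ1d q).mul (hS1d q))).div
        (hasDerivAt_sq_c (hSd q)) (pow_ne_zero 2 (hSne q))).add
      (((((hψ1d q).const_mul ((c₂ : ℂ))).mul (hPd q)).sub
          (((hψd q).const_mul ((c₂ : ℂ))).mul ((hSd q).const_mul ((c₂ : ℂ))))).div
        (hasDerivAt_sq_c (hPd q)) (pow_ne_zero 2 (hPne q)))).const_mul (-Complex.I)
  rw [hE, hK, claimQ h μ F c₁ c₂ hneg hφ0 hF hh hμ _ _ q hEd,
      claimH h μ F c₁ c₂ hh hneg hφ0 hF hμ _ _ _ q hderivK hdK1]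
  simp only [Pi.mul_apply, Pi.sub_apply, Pi.add_apply, Pi.div_apply, Pi.neg_apply]
  have hSi : scx h q * (scx h q)⁻¹ = 1 := mul_inv_cancel₀ (hSne q)
  have hPi : pcx F c₁ c₂ q * (pcx F c₁ c₂ q)⁻¹ = 1 := mul_inv_cancel₀ (hPne q)
  linear_combination (((-1 : ℂ) * ((pcx F c₁ c₂ q)⁻¹)^3 * (ψ q) * ((c₂ : ℂ))^3 * (Complex.I)) + (((scx h q)⁻¹) * ((pcx F c₁ c₂ q)⁻¹)^2 * (deriv ψ q) * ((c₂ : ℂ))^2 * (Complex.I)) + (((scx h q)⁻¹)^2 * ((pcx F c₁ c₂ q)⁻¹) * (deriv (deriv ψ) q) * ((c₂ : ℂ)) * (Complex.I)) + ((1/2 : ℂ) * ((scx h q)⁻¹)^2 * ((pcx F c₁ c₂ q)⁻¹)^2 * (s1cx h q) * (ψ q) * ((c₂ : ℂ))^2 * (Complex.I)) + ((-1/2 : ℂ) * ((scx h q)⁻¹)^4 * (s1cx h q) * (deriv (deriv ψ) q) * (Complex.I)) + ((-1/2 : ℂ) * ((scx h q)⁻¹)^5 * (s1cx h q)^2 *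 (deriv ψ q) * (Complex.I)) + ((pcx F c₁ c₂ q) * ((pcx F c₁ c₂ q)⁻¹)^4 * (ψ q) * ((c₂ : ℂ))^3 * (Complex.I)) + ((-1 : ℂ) * (pcx F c₁ c₂ q)^2 * ((scx h q)⁻¹) * ((pcx F c₁ c₂ q)⁻¹)^4 * (deriv ψ q) * ((c₂ : ℂ))^2 * (Complex.I)) + ((scx h q) * ((scx h q)⁻¹)^2 * ((pcx F c₁ c₂ q)⁻¹)^2 * (deriv ψ q) * ((c₂ : ℂ))^2 * (Complex.I)) + ((-1 : ℂ) * (scx h q) * ((scx h q)⁻¹)^5 * (s1cx h q) * (deriv (deriv ψ) q) * (Complex.I)) + ((-3/2 : ℂ) * (scx h q) * ((scx h q)⁻¹)^6 * (s1cx h q)^2 * (deriv ψ q) * (Complex.I)) + ((scx h q) * (pcx F c₁ c₂ q) * ((scx h q)⁻¹) * ((pcx F c₁ c₂ q)⁻¹)^4 * (ψ q) * ((c₂ : ℂ))^3 * (Complex.I)) + ((1/2 : ℂ) * (scx h q)^2 * ((scx h q)⁻¹)^5 * (deriv (deriv (deriv ψ)) q) * (Complex.I)) + ((1/2 : ℂ)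 * (scx h q)^2 * ((scx h q)⁻¹)^6 * (s2cx h q) * (deriv ψ q) * (Complex.I))) * hSi + ((((pcx F c₁ c₂ q)⁻¹)^3 * (ψ q) * ((c₂ : ℂ))^3 * (Complex.I)) + ((1/2 : ℂ) * ((scx h q)⁻¹)^2 * ((pcx F c₁ c₂ q)⁻¹) * (deriv (deriv ψ) q) * ((c₂ : ℂ)) * (Complex.I)) + ((-1/2 : ℂ) * ((scx h q)⁻¹)^2 * ((pcx F c₁ c₂ q)⁻¹)^2 * (s1cx h q) * (ψ q) * ((c₂ : ℂ))^2 * (Complex.I)) + ((1/2 : ℂ) * ((scx h q)⁻¹)^3 * ((pcx F c₁ c₂ q)⁻¹) * (s1cx h q) * (deriv ψ q) * ((c₂ : ℂ)) * (Complex.I)) + ((-1 : ℂ) * (pcx F c₁ c₂ q) * ((scx h q)⁻¹) * ((pcx F c₁ c₂ q)⁻¹)^3 * (deriv ψ q) * ((c₂ : ℂ))^2 * (Complex.I)) + ((1/2 : ℂ) * (pcx F c₁ c₂ q) * ((scx h q)⁻¹)^2 * ((pcx F c₁ c₂ q)⁻¹)^2 * (deriv (deriv ψ) q) * ((c₂ :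 ℂ)) * (Complex.I)) + ((-1/2 : ℂ) * (pcx F c₁ c₂ q) * ((scx h q)⁻¹)^2 * ((pcx F c₁ c₂ q)⁻¹)^3 * (s1cx h q) * (ψ q) * ((c₂ : ℂ))^2 * (Complex.I)) + ((1/2 : ℂ) * (pcx F c₁ c₂ q)^2 * ((scx h q)⁻¹)^2 * ((pcx F c₁ c₂ q)⁻¹)^3 * (deriv (deriv ψ) q) * ((c₂ : ℂ)) * (Complex.I))) * hPi
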